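/- Let S : ℝ^d → ℝ^d be a C¹ lower-triangular map (S_i depends only on y_1,…,y_i) with ∂S_i/∂y_i(y) > 0 for all y and i, and suppose each one-dimensional section y_i ↦ S_i(y_1,…,y_{i-1}, y_i) is surjective onto ℝ. Then S is a bijection from ℝ^d to ℝ^d. -/

import Mathlib

/-!
Positivity of `∂S_i/∂y_i` makes every section `t ↦ S_i(y_1,…,y_{i-1},t)` strictly increasing,
hence injective, and by hypothesis it is surjective. Because `S_i` only sees the first `i`
coordinates, `S y = x` can then be solved one coordinate at a time, each step having exactly one
solution.
-/

open Function

def IsLowerTriangularMap {ι α β : Type*} [LE ι] (S : (ι → α) → ι → β) : Prop :=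
  ∀ (i : ι) (y y' : ι → α), (∀ j ≤ i, y j = y' j) → S y i = S y' i

theorem strictMono_comp_update_of_fderiv_pos {ι : Type*} [Fintype ι] [DecidableEq ι]
    {f : (ι → ℝ) → ℝ} (hf : Differentiable ℝ f) (i : ι)
    (hpos : ∀ y, 0 < fderiv ℝ f y (Pi.single i 1)) (y : ι → ℝ) :
    StrictMono fun t : ℝ => f (update y i t) := by
  have hderiv : ∀ t : ℝ, HasDerivAt (fun t : ℝ => f (update y i t))
      (fderiv ℝ f (update y i t) (Pi.single i 1)) t := fun t =>
    (hf _).hasFDerivAt.comp_hasDerivAt t (hasDerivAt_update y i t)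
  refine strictMono_of_deriv_pos fun t => ?_
  rw [(hderiv t).deriv]
  exact hpos _

namespace IsLowerTriangularMap

variable {ι α β : Type*} {S : (ι → α) → ι → β}

theorem injective [LinearOrder ι] [WellFoundedLT ι] (hS : IsLowerTriangularMap S)
    (hinj : ∀ (i : ι) (y : ι → α), Injective fun t => S (update y i t) i) :
    Injective S := by
  intro y y' hyy'
  funext i
  induction i using WellFoundedLT.induction with
  | _ i ih =>
  have hagree : ∀ j ≤ i, update y i (y' i) j = y' j := by
    intro j hj
    rcases hj.lt_or_eq with hj | rfl
    · rw [update_of_ne hj.ne, ih j hj]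
    · exact update_self ..
  refine hinj i y ?_
  change S (update y i (y i)) i = S (update y i (y' i)) i
  rw [update_eq_self, hS i _ _ hagree, hyy']

theorem surjective [Nonempty α] {d : ℕ} {S : (Fin d → α) → Fin d → β}
    (hS : IsLowerTriangularMap S)
    (hsurj : ∀ (i : Fin d) (y : Fin d → α), Surjective fun t => S (update y i t) i) :
    Surjective S := by
  intro x
  have hsolve : ∀ k ≤ d, ∃ y, ∀ j : Fin d, (j : ℕ) < k → S y j = x j := by
    intro k
    induction k with
    | zero => exact fun _ => ⟨Classical.arbitrary _, nofun⟩
    | succ k ih =>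
      intro hk
      obtain ⟨y, hy⟩ := ih (Nat.le_of_succ_le hk)
      let i : Fin d := ⟨k, hk⟩
      obtain ⟨t, ht⟩ := hsurj i y (x i)
      refine ⟨update y i t, fun j hj => ?_⟩
      rcases (Nat.lt_succ_iff.mp hj).lt_or_eq with hjk | hjk
      · rw [← hy j hjk]
        exact hS j _ _ fun l hl => update_of_ne (Fin.ne_of_lt (lt_of_le_of_lt hl hjk)) ..
      · obtain rfl : j = i := Fin.ext hjk
        exact ht
  obtain ⟨y, hy⟩ := hsolve d le_rfl
  exact ⟨y, funext fun j => hy j j.isLt⟩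

end IsLowerTriangularMap

/-- A `C¹` lower-triangular map `S` (each `S_i` depends only on `y_1,…,y_i`) with
positive diagonal partials `∂S_i/∂y_i > 0` whose one-dimensional sections are
surjective onto `ℝ` is a bijection of `ℝ^d`. -/
theorem stmt_16 {d : ℕ} (S : (Fin d → ℝ) → (Fin d → ℝ)) (hS : ContDiff ℝ 1 S)
    (htri : ∀ (i : Fin d) (y y' : Fin d → ℝ),
      (∀ j ≤ i, y j = y' j) → S y i = S y' i)
    (hpos : ∀ (y : Fin d → ℝ) (i : Fin d),
      0 < fderiv ℝ (fun z => S z i) y (Pi.single i (1 : ℝ)))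
    (hsurj : ∀ (i : Fin d) (y : Fin d → ℝ),
      Function.Surjective (fun t : ℝ => S (Function.update y i t) i)) :
    Function.Bijective S := by
  have hmono : ∀ (i : Fin d) (y : Fin d → ℝ), StrictMono fun t => S (update y i t) i :=
    fun i => strictMono_comp_update_of_fderiv_pos
      ((differentiable_pi.mp (hS.differentiable one_ne_zero)) i) i (hpos · i)
  have hStri : IsLowerTriangularMap S := htri
  exact ⟨hStri.injective fun i y => (hmono i y).injective, hStri.surjective hsurj⟩
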